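/- arXiv:math/0408383 — 8 statements merged into one kernel-verified Lean document; each statement's English description precedes it below -/
import Mathlib

section
/- Let $k$ be a field of characteristic 2, $a,b\in k$ with $a\neq 0$, and let $P(x)=a^2x^5+b^2x+a$. Then any 4 roots of $P$ in an algebraic closure are linearly independent over $\mathbb{F}_2$, and they form a basis of the $\mathbb{F}_2$-vector space of roots of $E_{ab}(x)=a^4x^{16}+b^4x^8+b^2x^2+ax$. -/
/-- Any 4 (distinct) roots of `P(x) = a²x⁵ + b²x + a` are linearly independent over
`𝔽₂` (in characteristic 2 this means all nonempty subset sums are nonzero), and they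
form a basis of the `𝔽₂`-vector space of roots of
`E_ab(x) = a⁴x¹⁶ + b⁴x⁸ + b²x² + ax`: every root of `E_ab` is a subset sum of them. -/
theorem stmt_7 (F : Type*) [Field F] [CharP F 2] (a b : F) (ha : a ≠ 0)
    (z : Fin 4 → F) (hinj : Function.Injective z)
    (hroots : ∀ i, a ^ 2 * z i ^ 5 + b ^ 2 * z i + a = 0) :
    (∀ s : Finset (Fin 4), s.Nonempty → ∑ i ∈ s, z i ≠ 0) ∧
    (∀ v : F, a ^ 4 * v ^ 16 + b ^ 4 * v ^ 8 + b ^ 2 * v ^ 2 + a * v = 0 ↔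
      ∃ s : Finset (Fin 4), v = ∑ i ∈ s, z i) := by
  classical
  have htwo : (2 : F) = 0 := by exact_mod_cast CharP.cast_eq_zero F 2
  have hzne : ∀ i, z i ≠ 0 := by
    intro i h
    exact ha (by linear_combination hroots i - (a ^ 2 * z i ^ 4 + b ^ 2) * h)
  have hdiff : ∀ i j : Fin 4, i ≠ j → z i + z j ≠ 0 := by
    intro i j hij h
    exact hij (hinj (show z i = z j by linear_combination h - z j * htwo))
  have aux3 : ∀ u v : F, u ≠ 0 → v ≠ 0 → u + v ≠ 0 →
      a ^ 2 * u ^ 5 + b ^ 2 * u + a = 0 → a ^ 2 * v ^ 5 + b ^ 2 * v + a = 0 →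
      a ^ 2 * (u + v) ^ 5 + b ^ 2 * (u + v) + a = 0 → False := by
    intro u v hu0 hv0 huv hu hv hw
    have h1 : (u + v) * (a ^ 2 * (u ^ 4 + u ^ 3 * v + u ^ 2 * v ^ 2 + u * v ^ 3 + v ^ 4) + b ^ 2) = 0 := by
      linear_combination hu + hv +
        (a ^ 2 * u * v ^ 4 + a ^ 2 * u ^ 2 * v ^ 3 + a ^ 2 * u ^ 3 * v ^ 2 + a ^ 2 * u ^ 4 * v - a) * htwo
    have hB1 := (mul_eq_zero.mp h1).resolve_left huv
    have h2 : v * (a ^ 2 * (u ^ 4 + u * v ^ 3 + v ^ 4) + b ^ 2) = 0 := by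
      linear_combination hu + hw +
        (-(b ^ 2 * u) - a - 2 * a ^ 2 * u * v ^ 4 - 5 * a ^ 2 * u ^ 2 * v ^ 3 - 5 * a ^ 2 * u ^ 3 * v ^ 2
          - 2 * a ^ 2 * u ^ 4 * v - a ^ 2 * u ^ 5) * htwo
    have hB2 := (mul_eq_zero.mp h2).resolve_left hv0
    have h3 : a ^ 2 * u ^ 2 * v * (u + v) = 0 := by linear_combination hB1 - hB2
    exact mul_ne_zero (mul_ne_zero (mul_ne_zero (pow_ne_zero 2 ha) (pow_ne_zero 2 hu0)) hv0) huv h3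
  have aux4 : ∀ u v w : F, u + v ≠ 0 → u + w ≠ 0 → v + w ≠ 0 →
      a ^ 2 * u ^ 5 + b ^ 2 * u + a = 0 → a ^ 2 * v ^ 5 + b ^ 2 * v + a = 0 →
      a ^ 2 * w ^ 5 + b ^ 2 * w + a = 0 →
      a ^ 2 * (u + v + w) ^ 5 + b ^ 2 * (u + v + w) + a = 0 → False := by
    intro u v w huv huw hvw hu hv hw hx
    have hRu : a ^ 2 * (u ^ 2 + v ^ 2 + w ^ 2 + u * v + u * w + v * w) * u ^ 3
        + a ^ 2 * (u * v * w + (u + v + w) * (u * v + u * w + v * w)) * u ^ 2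
        + (a ^ 2 * (u * v * w * (u + v + w)) + b ^ 2) * u + a = 0 := by
      linear_combination hu + (a ^ 2 * u ^ 2 * v * w ^ 2 + a ^ 2 * u ^ 2 * v ^ 2 * w + a ^ 2 * u ^ 3 * w ^ 2
        + 3 * a ^ 2 * u ^ 3 * v * w + a ^ 2 * u ^ 3 * v ^ 2 + a ^ 2 * u ^ 4 * w + a ^ 2 * u ^ 4 * v) * htwo
    have hRv : a ^ 2 * (u ^ 2 + v ^ 2 + w ^ 2 + u * v + u * w + v * w) * v ^ 3
        + a ^ 2 * (u * v * w + (u + v + w) * (u * v + u * w + v * w)) * v ^ 2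
        + (a ^ 2 * (u * v * w * (u + v + w)) + b ^ 2) * v + a = 0 := by
      linear_combination hv + (a ^ 2 * v ^ 3 * w ^ 2 + a ^ 2 * v ^ 4 * w + a ^ 2 * u * v ^ 2 * w ^ 2
        + 3 * a ^ 2 * u * v ^ 3 * w + a ^ 2 * u * v ^ 4 + a ^ 2 * u ^ 2 * v ^ 2 * w + a ^ 2 * u ^ 2 * v ^ 3) * htwo
    have hRw : a ^ 2 * (u ^ 2 + v ^ 2 + w ^ 2 + u * v + u * w + v * w) * w ^ 3
        + a ^ 2 * (u * v * w + (u + v + w) * (u * v + u * w + v * w)) * w ^ 2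
        + (a ^ 2 * (u * v * w * (u + v + w)) + b ^ 2) * w + a = 0 := by
      linear_combination hw + (a ^ 2 * v * w ^ 4 + a ^ 2 * v ^ 2 * w ^ 3 + a ^ 2 * u * w ^ 4
        + 3 * a ^ 2 * u * v * w ^ 3 + a ^ 2 * u * v ^ 2 * w ^ 2 + a ^ 2 * u ^ 2 * w ^ 3 + a ^ 2 * u ^ 2 * v * w ^ 2) * htwo
    have hRt : a ^ 2 * (u ^ 2 + v ^ 2 + w ^ 2 + u * v + u * w + v * w) * (u + v + w) ^ 3
        + a ^ 2 * (u * v * w + (u + v + w) * (u * v + u * w + v * w)) * (u + v + w) ^ 2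
        + (a ^ 2 * (u * v * w * (u + v + w)) + b ^ 2) * (u + v + w) + a = 0 := by
      linear_combination hx + (a ^ 2 * u * v * w ^ 3 + 2 * a ^ 2 * u * v ^ 2 * w ^ 2 + a ^ 2 * u * v ^ 3 * w
        + 2 * a ^ 2 * u ^ 2 * v * w ^ 2 + 2 * a ^ 2 * u ^ 2 * v ^ 2 * w + a ^ 2 * u ^ 3 * v * w) * htwo
    have hSuv' : (u + v) * (a ^ 2 * (u ^ 2 + v ^ 2 + w ^ 2 + u * v + u * w + v * w) * (u ^ 2 + u * v + v ^ 2)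
        + a ^ 2 * (u * v * w + (u + v + w) * (u * v + u * w + v * w)) * (u + v)
        + (a ^ 2 * (u * v * w * (u + v + w)) + b ^ 2)) = 0 := by
      linear_combination hRu + hRv + (-a + 2 * a ^ 2 * u * v ^ 2 * w ^ 2 + 2 * a ^ 2 * u * v ^ 3 * w
        + a ^ 2 * u * v ^ 4 + 2 * a ^ 2 * u ^ 2 * v * w ^ 2 + 6 * a ^ 2 * u ^ 2 * v ^ 2 * w
        + 3 * a ^ 2 * u ^ 2 * v ^ 3 + 2 * a ^ 2 * u ^ 3 * v * w + 3 * a ^ 2 * u ^ 3 * v ^ 2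
        + a ^ 2 * u ^ 4 * v) * htwo
    have hSuv := (mul_eq_zero.mp hSuv').resolve_left huv
    have hSuw' : (u + w) * (a ^ 2 * (u ^ 2 + v ^ 2 + w ^ 2 + u * v + u * w + v * w) * (u ^ 2 + u * w + w ^ 2)
        + a ^ 2 * (u * v * w + (u + v + w) * (u * v + u * w + v * w)) * (u + w)
        + (a ^ 2 * (u * v * w * (u + v + w)) + b ^ 2)) = 0 := by
      linear_combination hRu + hRw + (-a + a ^ 2 * u * w ^ 4 + 2 * a ^ 2 * u * v * w ^ 3
        + 2 * a ^ 2 * u * v ^ 2 * w ^ 2 + 3 * a ^ 2 * u ^ 2 * w ^ 3 + 6 * a ^ 2 * u ^ 2 * v * w ^ 2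
        + 2 * a ^ 2 * u ^ 2 * v ^ 2 * w + 3 * a ^ 2 * u ^ 3 * w ^ 2 + 2 * a ^ 2 * u ^ 3 * v * w
        + a ^ 2 * u ^ 4 * w) * htwo
    have hSuw := (mul_eq_zero.mp hSuw').resolve_left huw
    have hSut' : (v + w) * (a ^ 2 * (u ^ 2 + v ^ 2 + w ^ 2 + u * v + u * w + v * w)
          * (u ^ 2 + u * (u + v + w) + (u + v + w) ^ 2)
        + a ^ 2 * (u * v * w + (u + v + w) * (u * v + u * w + v * w)) * (v + w)
        + (a ^ 2 * (u * v * w * (u + v + w)) + b ^ 2)) = 0 := by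
      linear_combination hRu + hRt + (-(b ^ 2 * u) - a - a ^ 2 * u * v * w ^ 3
        - 2 * a ^ 2 * u * v ^ 2 * w ^ 2 - a ^ 2 * u * v ^ 3 * w - a ^ 2 * u ^ 2 * w ^ 3
        - 7 * a ^ 2 * u ^ 2 * v * w ^ 2 - 7 * a ^ 2 * u ^ 2 * v ^ 2 * w - a ^ 2 * u ^ 2 * v ^ 3
        - 3 * a ^ 2 * u ^ 3 * w ^ 2 - 8 * a ^ 2 * u ^ 3 * v * w - 3 * a ^ 2 * u ^ 3 * v ^ 2
        - 2 * a ^ 2 * u ^ 4 * w - 2 * a ^ 2 * u ^ 4 * v - a ^ 2 * u ^ 5) * htwo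
    have hSut := (mul_eq_zero.mp hSut').resolve_left hvw
    have hT1' : (v + w) * (a ^ 2 * (u ^ 2 + v ^ 2 + w ^ 2 + u * v + u * w + v * w) * (u + v + w)
        + a ^ 2 * (u * v * w + (u + v + w) * (u * v + u * w + v * w))) = 0 := by
      linear_combination hSuv - hSuw + (a ^ 2 * w ^ 4 + 3 * a ^ 2 * v * w ^ 3 + 3 * a ^ 2 * v ^ 2 * w ^ 2
        + a ^ 2 * v ^ 3 * w + 3 * a ^ 2 * u * w ^ 3 + 7 * a ^ 2 * u * v * w ^ 2 + 3 * a ^ 2 * u * v ^ 2 * w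
        + 3 * a ^ 2 * u ^ 2 * w ^ 2 + 3 * a ^ 2 * u ^ 2 * v * w + a ^ 2 * u ^ 3 * w) * htwo
    have hT1 := (mul_eq_zero.mp hT1').resolve_left hvw
    have hT2' : (u + w) * (a ^ 2 * (u ^ 2 + v ^ 2 + w ^ 2 + u * v + u * w + v * w) * w
        + a ^ 2 * (u * v * w + (u + v + w) * (u * v + u * w + v * w))) = 0 := by
      linear_combination hSuv - hSut + (a ^ 2 * w ^ 4 + 3 * a ^ 2 * v * w ^ 3 + 3 * a ^ 2 * v ^ 2 * w ^ 2
        + a ^ 2 * v ^ 3 * w + 4 * a ^ 2 * u * w ^ 3 + 9 * a ^ 2 * u * v * w ^ 2 + 5 * a ^ 2 * u * v ^ 2 * w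
        + a ^ 2 * u * v ^ 3 + 5 * a ^ 2 * u ^ 2 * w ^ 2 + 6 * a ^ 2 * u ^ 2 * v * w + 2 * a ^ 2 * u ^ 2 * v ^ 2
        + 3 * a ^ 2 * u ^ 3 * w + 2 * a ^ 2 * u ^ 3 * v + a ^ 2 * u ^ 4) * htwo
    have hT2 := (mul_eq_zero.mp hT2').resolve_left huw
    have hc3' : (u + v) * (a ^ 2 * (u ^ 2 + v ^ 2 + w ^ 2 + u * v + u * w + v * w)) = 0 := by
      linear_combination hT1 - hT2
    have hc3 := (mul_eq_zero.mp hc3').resolve_left huv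
    have hc2 : a ^ 2 * (u * v * w + (u + v + w) * (u * v + u * w + v * w)) = 0 := by
      linear_combination hT2 - w * hc3
    have hc1 : a ^ 2 * (u * v * w * (u + v + w)) + b ^ 2 = 0 := by
      linear_combination hSuv - (u ^ 2 + u * v + v ^ 2) * hc3 - (u + v) * hc2
    exact ha (by linear_combination hRu - u ^ 3 * hc3 - u ^ 2 * hc2 - u * hc1)
  have part1 : ∀ s : Finset (Fin 4), s.Nonempty → ∑ i ∈ s, z i ≠ 0 := by
    intro s hs hsum
    have trip : ∀ i j k : Fin 4, i ≠ j → z i + z j + z k = 0 → False := by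
      intro i j k hij h
      have hzk : z k = z i + z j := by linear_combination h - (z i + z j) * htwo
      have hk := hroots k
      rw [hzk] at hk
      exact aux3 (z i) (z j) (hzne i) (hzne j) (hdiff i j hij) (hroots i) (hroots j) hk
    have quad : z 0 + z 1 + z 2 + z 3 = 0 → False := by
      intro h
      have hz3 : z 3 = z 0 + z 1 + z 2 := by linear_combination h - (z 0 + z 1 + z 2) * htwo
      have h3 := hroots 3
      rw [hz3] at h3
      exact aux4 (z 0) (z 1) (z 2) (hdiff 0 1 (by decide)) (hdiff 0 2 (by decide))
        (hdiff 1 2 (by decide)) (hroots 0) (hroots 1) (hroots 2) h3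
    fin_cases s
    · simp at hs
    all_goals simp at hsum
    · exact hzne 0 hsum
    · exact hzne 1 hsum
    · exact hdiff 0 1 (by decide) hsum
    · exact hzne 2 hsum
    · exact hdiff 0 2 (by decide) hsum
    · exact hdiff 1 2 (by decide) hsum
    · exact trip 0 1 2 (by decide) (by linear_combination hsum)
    · exact hzne 3 hsum
    · exact hdiff 0 3 (by decide) hsum
    · exact hdiff 1 3 (by decide) hsum
    · exact trip 0 1 3 (by decide) (by linear_combination hsum)
    · exact hdiff 2 3 (by decide) hsum
    · exact trip 0 2 3 (by decide) (by linear_combination hsum)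
    · exact trip 1 2 3 (by decide) (by linear_combination hsum)
    · exact quad (by linear_combination hsum)
  refine ⟨part1, ?_⟩
  have hPhiz : ∀ i, a ^ 4 * z i ^ 16 + b ^ 4 * z i ^ 8 + b ^ 2 * z i ^ 2 + a * z i = 0 := by
    intro i
    linear_combination (z i ^ 6 * (a ^ 2 * z i ^ 5 + b ^ 2 * z i + a) + z i) * hroots i
      - (a * b ^ 2 * z i ^ 7 + a ^ 2 * z i ^ 6 + a ^ 2 * b ^ 2 * z i ^ 12 + a ^ 3 * z i ^ 11) * htwo
  have hsq : ∀ s t : F, (s + t) ^ 2 = s ^ 2 + t ^ 2 := fun s t => by linear_combination s * t * htwo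
  have hadd : ∀ x y : F,
      a ^ 4 * (x + y) ^ 16 + b ^ 4 * (x + y) ^ 8 + b ^ 2 * (x + y) ^ 2 + a * (x + y)
        = (a ^ 4 * x ^ 16 + b ^ 4 * x ^ 8 + b ^ 2 * x ^ 2 + a * x)
          + (a ^ 4 * y ^ 16 + b ^ 4 * y ^ 8 + b ^ 2 * y ^ 2 + a * y) := by
    intro x y
    have h8 : (x + y) ^ 8 = x ^ 8 + y ^ 8 := by
      rw [show (x + y) ^ 8 = (((x + y) ^ 2) ^ 2) ^ 2 by ring, hsq, hsq, hsq]; ring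
    have h16 : (x + y) ^ 16 = x ^ 16 + y ^ 16 := by
      rw [show (x + y) ^ 16 = ((((x + y) ^ 2) ^ 2) ^ 2) ^ 2 by ring, hsq, hsq, hsq, hsq]; ring
    rw [h16, h8, hsq]; ring
  set φ : F →+ F := AddMonoidHom.mk'
    (fun x => a ^ 4 * x ^ 16 + b ^ 4 * x ^ 8 + b ^ 2 * x ^ 2 + a * x) hadd with hφ
  have hφs : ∀ s : Finset (Fin 4),
      a ^ 4 * (∑ i ∈ s, z i) ^ 16 + b ^ 4 * (∑ i ∈ s, z i) ^ 8 + b ^ 2 * (∑ i ∈ s, z i) ^ 2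
        + a * (∑ i ∈ s, z i) = 0 := by
    intro s
    have h : φ (∑ i ∈ s, z i) = ∑ i ∈ s, φ (z i) := map_sum φ z s
    show φ (∑ i ∈ s, z i) = 0
    rw [h]
    exact Finset.sum_eq_zero fun i _ => hPhiz i
  have hsuminj : Function.Injective (fun s : Finset (Fin 4) => ∑ i ∈ s, z i) := by
    intro s t hst
    simp only at hst
    by_contra hne
    have hnempty : (symmDiff s t).Nonempty := by
      rw [Finset.nonempty_iff_ne_empty]
      intro h
      exact hne (symmDiff_eq_bot.mp h)
    apply part1 _ hnempty
    have h1 := Finset.sum_inter_add_sum_sdiff s t z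
    have h2 := Finset.sum_inter_add_sum_sdiff t s z
    rw [Finset.inter_comm] at h2
    have h3 : ∑ i ∈ symmDiff s t, z i = ∑ i ∈ s \ t, z i + ∑ i ∈ t \ s, z i := by
      rw [symmDiff_def, Finset.sup_eq_union, Finset.sum_union disjoint_sdiff_sdiff]
    linear_combination h3 + h1 + h2 + hst + (∑ i ∈ t, z i - ∑ i ∈ s ∩ t, z i) * htwo
  set E : Polynomial F := Polynomial.C (a ^ 4) * Polynomial.X ^ 16
    + Polynomial.C (b ^ 4) * Polynomial.X ^ 8 + Polynomial.C (b ^ 2) * Polynomial.X ^ 2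
    + Polynomial.C a * Polynomial.X with hE
  have hEdeg : E.natDegree = 16 := by
    rw [hE]
    compute_degree!
  have hEne : E ≠ 0 := fun h => by simp [h] at hEdeg
  have hEeval : ∀ x : F,
      E.eval x = a ^ 4 * x ^ 16 + b ^ 4 * x ^ 8 + b ^ 2 * x ^ 2 + a * x := by
    intro x; simp [hE]
  set T : Finset F := Finset.image (fun s : Finset (Fin 4) => ∑ i ∈ s, z i) Finset.univ with hT
  have hTcard : T.card = 16 := by
    rw [hT, Finset.card_image_of_injective _ hsuminj, Finset.card_univ, Fintype.card_finset]
    simp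
  have hTsub : T ⊆ E.roots.toFinset := by
    intro x hx
    rw [Multiset.mem_toFinset, Polynomial.mem_roots hEne]
    obtain ⟨s, -, rfl⟩ := Finset.mem_image.mp hx
    show E.eval _ = 0
    rw [hEeval]
    exact hφs s
  have hTeq : T = E.roots.toFinset := by
    refine Finset.eq_of_subset_of_card_le hTsub ?_
    rw [hTcard]
    exact le_trans (Multiset.toFinset_card_le _) (le_trans (Polynomial.card_roots' E) hEdeg.le)
  intro v
  constructor
  · intro hv
    have hvmem : v ∈ E.roots.toFinset := by
      rw [Multiset.mem_toFinset, Polynomial.mem_roots hEne]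
      show E.eval v = 0
      rw [hEeval]; exact hv
    rw [← hTeq] at hvmem
    obtain ⟨s, -, hs⟩ := Finset.mem_image.mp hvmem
    exact ⟨s, hs.symm⟩
  · rintro ⟨s, rfl⟩
    exact hφs s
end

section
/- Let $k$ be a finite field of characteristic 2, $a\in k^*$, $b\in k$, $P(x)=a^2x^5+b^2x+a$. Each of the 10 roots $v$ of $1+x^5P(x)$ can be written in a unique way as the sum of two roots of $P(x)$ (in an algebraic closure). -/
theorem stmt_8 (F : Type*) [Field F] [CharP F 2] [IsAlgClosed F]
    (a b : F) (ha : a ≠ 0)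
    (v : F) (hv : a ^ 2 * v ^ 10 + b ^ 2 * v ^ 6 + a * v ^ 5 + 1 = 0) :
    ∃! s : Finset F, s.card = 2 ∧
      (∀ z ∈ s, a ^ 2 * z ^ 5 + b ^ 2 * z + a = 0) ∧
      ∑ z ∈ s, z = v := by
  classical
  have h2 : (2 : F) = 0 := by exact_mod_cast CharP.cast_eq_zero F 2
  have hv0 : v ≠ 0 := by
    rintro rfl
    simp at hv
  have ha2 : a ^ 2 ≠ 0 := pow_ne_zero 2 ha
  have hnz : a ^ 2 * v ^ 5 ≠ 0 := mul_ne_zero ha2 (pow_ne_zero 5 hv0)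
  -- get a cube root of unity generator ω with ω² + ω + 1 = 0
  obtain ⟨ω, hom⟩ : ∃ ω : F, ω ^ 2 + ω + 1 = 0 := by
    have hdeg : (Polynomial.X ^ 2 + Polynomial.X + 1 : Polynomial F).degree = 2 := by
      compute_degree!
    have hdne : (Polynomial.X ^ 2 + Polynomial.X + 1 : Polynomial F).degree ≠ 0 := by
      rw [hdeg]; decide
    obtain ⟨x, hx⟩ := IsAlgClosed.exists_root _ hdne
    exact ⟨x, by simpa [Polynomial.IsRoot] using hx⟩
  -- get a root w of the quartic a²X⁴ + a²v³X + (a²v⁴+b²)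
  obtain ⟨w, hw⟩ : ∃ w : F, a ^ 2 * w ^ 4 + a ^ 2 * v ^ 3 * w + a ^ 2 * v ^ 4 + b ^ 2 = 0 := by
    have hdeg : (Polynomial.X ^ 4 + Polynomial.C (v ^ 3) * Polynomial.X
        + Polynomial.C (v ^ 4 + (b / a) ^ 2) : Polynomial F).degree = 4 := by
      compute_degree!
    have hdne : (Polynomial.X ^ 4 + Polynomial.C (v ^ 3) * Polynomial.X
        + Polynomial.C (v ^ 4 + (b / a) ^ 2) : Polynomial F).degree ≠ 0 := by
      rw [hdeg]; decide
    obtain ⟨x, hx⟩ := IsAlgClosed.exists_root _ hdne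
    refine ⟨x, ?_⟩
    have hx' : x ^ 4 + v ^ 3 * x + (v ^ 4 + (b / a) ^ 2) = 0 := by
      simpa [Polynomial.IsRoot] using hx
    have hb : (b / a) ^ 2 * a ^ 2 = b ^ 2 := by
      field_simp
    linear_combination a ^ 2 * hx' - hb
  -- A = P(w), B = P(w + ωv)
  set A : F := a ^ 2 * w ^ 5 + b ^ 2 * w + a with hA_def
  set B : F := a ^ 2 * (w + ω * v) ^ 5 + b ^ 2 * (w + ω * v) + a with hB_def
  -- the quartic also vanishes at w + ωv
  have hRω : a ^ 2 * (w + ω * v) ^ 4 + a ^ 2 * v ^ 3 * (w + ω * v) + a ^ 2 * v ^ 4 + b ^ 2 = 0 := by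
    linear_combination hw
      + (a^2*v^4*ω^2 - a^2*v^4*ω + 4*a^2*v^3*w*ω - 4*a^2*v^3*w + 6*a^2*v^2*w^2) * hom
      + (a^2*v^4*ω + 2*a^2*v^3*w - 3*a^2*v^2*w^2*ω - 3*a^2*v^2*w^2 + 2*a^2*v*w^3*ω) * h2
  -- A + B = a²v⁵  and  A·B = a²·Q(v) = 0
  have hsum : A + B = a ^ 2 * v ^ 5 := by
    rw [hA_def, hB_def]
    linear_combination (5*v*ω + 2*w) * hw
      + (a^2*v^5*ω^3 - a^2*v^5*ω^2 + a^2*v^5 + 5*a^2*v^4*w*ω^2 - 5*a^2*v^4*w*ω + 10*a^2*v^3*w^2*ω - 10*a^2*v^3*w^2 + 10*a^2*v^2*w^3) * hom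
      + (-3*a^2*v^5*ω - a^2*v^5 - a^2*v^4*w + 4*a^2*v^3*w^2 - 5*a^2*v^2*w^3*ω - 5*a^2*v^2*w^3 + a - 2*b^2*v*ω) * h2
  have hprod : A * B = 0 := by
    rw [hA_def, hB_def]
    linear_combination (a^2) * hv
      + (10*a^2*v^6*ω + a^2*v^6 + 4*a^2*v^5*w*ω + 9*a^2*v^5*w - a^2*v^4*w^2 + 9*a^2*v^3*w^3 - 10*a^2*v^2*w^4*ω - 10*a^2*v^2*w^4 + 5*a^2*v*w^5*ω + a^2*w^6 + 5*a*v*ω + 2*a*w + b^2*v*w*ω + b^2*w^2) * hw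
      + (a^4*v^5*w^5*ω^3 - a^4*v^5*w^5*ω^2 + a^4*v^5*w^5 + 5*a^4*v^4*w^6*ω^2 - 5*a^4*v^4*w^6*ω + 10*a^4*v^3*w^7*ω - 10*a^4*v^3*w^7 + 10*a^4*v^2*w^8 + a^3*v^5*ω^3 - a^3*v^5*ω^2 + a^3*v^5 + 5*a^3*v^4*w*ω^2 - 5*a^3*v^4*w*ω + 10*a^3*v^3*w^2*ω - 10*a^3*v^3*w^2 + 10*a^3*v^2*w^3 + a^2*b^2*v^5*w*ω^3 - a^2*b^2*v^5*w*ω^2 + a^2*b^2*v^5*w + 5*a^2*b^2*v^4*w^2*ω^2 - 5*a^2*b^2*v^4*w^2*ω + 10*a^2*b^2*v^3*w^3*ω - 10*a^2*b^2*v^3*w^3 + 10*a^2*b^2*v^2*w^4) * hom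
      + (-5*a^4*v^10*ω - a^4*v^10 - 7*a^4*v^9*w*ω - 5*a^4*v^9*w - 2*a^4*v^8*w^2*ω - 4*a^4*v^8*w^2 - 4*a^4*v^7*w^3 - 3*a^3*v^5*ω - a^3*v^5 - a^3*v^4*w + 4*a^3*v^3*w^2 - 5*a^3*v^2*w^3*ω - 5*a^3*v^2*w^3 - 5*a^2*b^2*v^6*ω - a^2*b^2*v^6 - 3*a^2*b^2*v^5*w*ω - 5*a^2*b^2*v^5*w + 2*a^2*b^2*v^4*w^2*ω - 2*a*b^2*v*ω) * h2
  -- shift identities: P(y + v) = P(y) when the quartic vanishes at y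
  have hshiftw : a ^ 2 * (w + v) ^ 5 + b ^ 2 * (w + v) + a = A := by
    rw [hA_def]
    linear_combination v * hw
      + (2*a^2*v^4*w + 5*a^2*v^3*w^2 + 5*a^2*v^2*w^3 + 2*a^2*v*w^4) * h2
  have hshiftω : a ^ 2 * ((w + ω * v) + v) ^ 5 + b ^ 2 * ((w + ω * v) + v) + a = B := by
    rw [hB_def]
    linear_combination v * hRω
      + (2*a^2*v^4*(w + ω*v) + 5*a^2*v^3*(w + ω*v)^2 + 5*a^2*v^2*(w + ω*v)^3 + 2*a^2*v*(w + ω*v)^4) * h2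
  -- not both A and B are zero
  have hnotboth : ¬ (A = 0 ∧ B = 0) := by
    rintro ⟨h1, h0⟩
    exact hnz (by linear_combination h1 + h0 - hsum)
  -- the key structural fact
  obtain ⟨u, hu1, hu2, hu3⟩ :
      ∃ u : F, (a ^ 2 * u ^ 5 + b ^ 2 * u + a = 0)
        ∧ (a ^ 2 * (u + v) ^ 5 + b ^ 2 * (u + v) + a = 0)
        ∧ ∀ y : F, a ^ 2 * y ^ 5 + b ^ 2 * y + a = 0 →
            a ^ 2 * (y + v) ^ 5 + b ^ 2 * (y + v) + a = 0 → (y = u ∨ y = u + v) := by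
    have quartic : ∀ y : F, a ^ 2 * y ^ 5 + b ^ 2 * y + a = 0 →
        a ^ 2 * (y + v) ^ 5 + b ^ 2 * (y + v) + a = 0 →
        (y = w ∨ y = w + v ∨ y = w + ω * v ∨ y = w + (ω + 1) * v) := by
      intro y hy hyv
      have hvR : v * (a ^ 2 * y ^ 4 + a ^ 2 * v ^ 3 * y + a ^ 2 * v ^ 4 + b ^ 2) = 0 := by
        linear_combination hyv - hy
          - (2*a^2*v^4*y + 5*a^2*v^3*y^2 + 5*a^2*v^2*y^3 + 2*a^2*v*y^4) * h2
      have hRy : a ^ 2 * y ^ 4 + a ^ 2 * v ^ 3 * y + a ^ 2 * v ^ 4 + b ^ 2 = 0 :=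
        (mul_eq_zero.mp hvR).resolve_left hv0
      have hfac : a ^ 2 * (y - w) * (y - w - v) * (y - w - ω * v) * (y - w - (ω + 1) * v) = 0 := by
        linear_combination hRy - hw
          - (-a^2*v^3*w + a^2*v^3*y - a^2*v^2*w^2 + 2*a^2*v^2*w*y - a^2*v^2*y^2) * hom
          - (-a^2*v^2*w^2*ω + 2*a^2*v^2*w*ω*y - a^2*v^2*ω*y^2 - a^2*v*w^3*ω - a^2*v*w^3 + 3*a^2*v*w^2*ω*y + 3*a^2*v*w^2*y - 3*a^2*v*w*ω*y^2 - 3*a^2*v*w*y^2 + a^2*v*ω*y^3 + a^2*v*y^3 - a^2*w^4 + 2*a^2*w^3*y - 3*a^2*w^2*y^2 + 2*a^2*w*y^3) * h2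
      rcases mul_eq_zero.mp hfac with h | h4
      · rcases mul_eq_zero.mp h with h | h3
        · rcases mul_eq_zero.mp h with h | h2'
          · rcases mul_eq_zero.mp h with h | h1
            · exact absurd h ha2
            · exact Or.inl (by linear_combination h1)
          · exact Or.inr (Or.inl (by linear_combination h2'))
        · exact Or.inr (Or.inr (Or.inl (by linear_combination h3)))
      · exact Or.inr (Or.inr (Or.inr (by linear_combination h4)))
    rcases mul_eq_zero.mp hprod with hA0 | hB0
    · -- u = w
      refine ⟨w, hA0, by rw [hshiftw]; exact hA0, ?_⟩
      intro y hy hyv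
      rcases quartic y hy hyv with h | h | h | h
      · exact Or.inl h
      · exact Or.inr h
      · exfalso; apply hnotboth
        refine ⟨hA0, ?_⟩
        rw [hB_def]
        rw [h] at hy; exact hy
      · exfalso; apply hnotboth
        refine ⟨hA0, ?_⟩
        have hy' : y = (w + ω * v) + v := by linear_combination h
        rw [hy'] at hy
        rw [hshiftω] at hy
        exact hy
    · -- u = w + ωv
      have hAne : A ≠ 0 := fun h => hnotboth ⟨h, hB0⟩
      refine ⟨w + ω * v, hB0, by rw [hshiftω]; exact hB0, ?_⟩
      intro y hy hyv
      rcases quartic y hy hyv with h | h | h | h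
      · exfalso; apply hAne; rw [h] at hy; rw [hA_def]; linear_combination hy
      · exfalso; apply hAne
        rw [h, hshiftw] at hy; exact hy
      · exact Or.inl h
      · exact Or.inr (by linear_combination h)
  -- assemble
  have huv : u ≠ u + v := by
    intro h
    exact hv0 (by linear_combination -h)
  refine ⟨{u, u + v}, ⟨?_, ?_, ?_⟩, ?_⟩
  · exact Finset.card_pair huv
  · intro z hz
    rcases Finset.mem_insert.mp hz with rfl | hz
    · exact hu1
    · rw [Finset.mem_singleton.mp hz]; exact hu2
  · rw [Finset.sum_pair huv]
    linear_combination u * h2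
  · rintro s ⟨hc, hroots, hsums⟩
    obtain ⟨y, z, hyz, rfl⟩ := Finset.card_eq_two.mp hc
    have hs : y + z = v := by rwa [Finset.sum_pair hyz] at hsums
    have hz : z = y + v := by linear_combination hs - y * h2
    have hy1 : a ^ 2 * y ^ 5 + b ^ 2 * y + a = 0 :=
      hroots y (Finset.mem_insert_self _ _)
    have hy2 : a ^ 2 * (y + v) ^ 5 + b ^ 2 * (y + v) + a = 0 := by
      rw [← hz]
      exact hroots z (Finset.mem_insert_of_mem (Finset.mem_singleton_self _))
    rcases hu3 y hy1 hy2 with h | h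
    · subst h; rw [hz]
    · rw [hz, h]
      have h' : (u + v) + v = u := by linear_combination v * h2
      rw [h', Finset.pair_comm]
end

section
/- Let $k$ be a finite field of characteristic 2, $a\in k^*$, $b\in k$, $P(x)=a^2x^5+b^2x+a$. Suppose $v\in k$ satisfies $v^5P(v)=1$ and $v=z+z'$ with $z,z'$ roots of $P$. Then $z$ and $z'$ are the roots of $T^2+vT+(av^3)^{-1}$; consequently $z,z'\in k$ if $(av^5)^{-1}\in\mathrm{AS}(k)$, and $z,z'$ lie in the quadratic extension $k_2\setminus k$ and are conjugate over $k$ otherwise. -/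
/-! Adding the equations `(z + v) P(z) = 0` and `z P(z + v) = 0` in characteristic 2 kills the
terms in `z⁶`, `z⁵` and `b²`, leaving `a v (a v³ z² + a v⁴ z + 1) = 0`: this is the quadratic
`T² + vT + (av³)⁻¹`. Substituting `T = vt` turns it into the Artin–Schreier equation
`t + t² = (av⁵)⁻¹`, so it has a root in `k` exactly when `(av⁵)⁻¹ ∈ AS(k)`. If it has none, it is
the minimal polynomial of `z`, and since finite extensions of finite fields are normal, its other
root `z'` is a Galois conjugate of `z`. -/

open Polynomial

section CharTwo

variable {K : Type*} [Field K] [CharP K 2]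

theorem sq_add_mul_add_inv_eq_zero_of_quintic_roots {a b v z z' : K} (ha : a ≠ 0) (hv : v ≠ 0)
    (hz : a ^ 2 * z ^ 5 + b ^ 2 * z + a = 0) (hz' : a ^ 2 * z' ^ 5 + b ^ 2 * z' + a = 0)
    (hsum : z + z' = v) :
    z ^ 2 + v * z + (a * v ^ 3)⁻¹ = 0 := by
  have h2 : (2 : K) = 0 := CharTwo.two_eq_zero
  obtain rfl : z' = v + z := by linear_combination hsum - z * h2
  have key : a * v * (a * v ^ 3 * z ^ 2 + a * v ^ 4 * z + 1) = 0 := by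
    linear_combination (z + v) * hz + z * hz' -
      (a ^ 2 * z ^ 6 + 2 * a ^ 2 * v ^ 4 * z ^ 2 + 5 * a ^ 2 * v ^ 3 * z ^ 3 +
        5 * a ^ 2 * v ^ 2 * z ^ 4 + 3 * a ^ 2 * v * z ^ 5 +
        b ^ 2 * v * z + b ^ 2 * z ^ 2 + a * z) * h2
  have hquad := (mul_eq_zero.mp key).resolve_left (mul_ne_zero ha hv)
  field_simp
  linear_combination hquad

theorem exists_sq_add_mul_add_eq_zero_iff {v c : K} (hv : v ≠ 0) :
    (∃ u, u ^ 2 + v * u + c = 0) ↔ ∃ t, c / v ^ 2 = t + t ^ 2 := by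
  have h2 : (2 : K) = 0 := CharTwo.two_eq_zero
  constructor
  · rintro ⟨u, hu⟩
    refine ⟨u / v, ?_⟩
    field_simp
    linear_combination -hu + c * h2
  · rintro ⟨t, ht⟩
    refine ⟨v * t, ?_⟩
    field_simp at ht
    linear_combination -ht + c * h2

end CharTwo

section Quadratic

variable {K L : Type*} [Field K] [Field L] [Algebra K L] {v c : K} {z : L}

theorem mem_range_algebraMap_iff_exists_root
    (hz : z ^ 2 + algebraMap K L v * z + algebraMap K L c = 0) :
    z ∈ Set.range (algebraMap K L) ↔ ∃ u, u ^ 2 + v * u + c = 0 := by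
  constructor
  · rintro ⟨u, rfl⟩
    exact ⟨u, (algebraMap K L).injective (by simpa using hz)⟩
  · rintro ⟨u, hu⟩
    have hu' := congrArg (algebraMap K L) hu
    simp only [map_add, map_mul, map_pow, map_zero] at hu'
    have hfactor : (z - algebraMap K L u) * (z - algebraMap K L (-u - v)) = 0 := by
      simp only [map_sub, map_neg]
      linear_combination hz - hu'
    rcases mul_eq_zero.mp hfactor with h | h
    · exact ⟨u, (sub_eq_zero.mp h).symm⟩
    · exact ⟨-u - v, (sub_eq_zero.mp h).symm⟩

theorem minpoly_eq_of_sq_add_mul_add_eq_zero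
    (hz : z ^ 2 + algebraMap K L v * z + algebraMap K L c = 0)
    (hzK : z ∉ Set.range (algebraMap K L)) :
    minpoly K z = X ^ 2 + C v * X + C c := by
  have hmonic : (X ^ 2 + C v * X + C c : K[X]).Monic := by monicity!
  have hdeg : (X ^ 2 + C v * X + C c : K[X]).natDegree = 2 := by compute_degree!
  have hroot : aeval z (X ^ 2 + C v * X + C c : K[X]) = 0 := by simpa using hz
  have hint : IsIntegral K z := ⟨_, hmonic, hroot⟩
  refine (eq_of_monic_of_dvd_of_natDegree_le (minpoly.monic hint) hmonic
    (minpoly.dvd K z hroot) ?_).symm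
  rw [hdeg, minpoly.two_le_natDegree_iff hint]
  simpa [RingHom.mem_range] using hzK

theorem exists_algEquiv_of_sq_add_mul_add_eq_zero [Normal K L] {z' : L}
    (hz : z ^ 2 + algebraMap K L v * z + algebraMap K L c = 0)
    (hz' : z' ^ 2 + algebraMap K L v * z' + algebraMap K L c = 0)
    (hzK : z ∉ Set.range (algebraMap K L)) :
    ∃ σ : L ≃ₐ[K] L, σ z = z' := by
  have hint : IsIntegral K z := Algebra.IsIntegral.isIntegral z
  have hconj : IsConjRoot K z' z := by
    refine (isConjRoot_of_aeval_eq_zero hint ?_).symm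
    rw [minpoly_eq_of_sq_add_mul_add_eq_zero hz hzK]
    simpa using hz'
  exact hconj.exists_algEquiv

end Quadratic

theorem stmt_9_general (k k₂ : Type*) [Field k] [CharP k 2]
    [Field k₂] [Fintype k₂] [Algebra k k₂]
    (a b v : k) (ha : a ≠ 0)
    (hv : v ^ 5 * (a ^ 2 * v ^ 5 + b ^ 2 * v + a) = 1)
    (z z' : k₂)
    (hz : algebraMap k k₂ (a ^ 2) * z ^ 5 + algebraMap k k₂ (b ^ 2) * z
            + algebraMap k k₂ a = 0)
    (hz' : algebraMap k k₂ (a ^ 2) * z' ^ 5 + algebraMap k k₂ (b ^ 2) * z'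
            + algebraMap k k₂ a = 0)
    (hsum : z + z' = algebraMap k k₂ v) :
    (z ^ 2 + algebraMap k k₂ v * z + algebraMap k k₂ ((a * v ^ 3)⁻¹) = 0 ∧
     z' ^ 2 + algebraMap k k₂ v * z' + algebraMap k k₂ ((a * v ^ 3)⁻¹) = 0) ∧
    ((∃ t : k, (a * v ^ 5)⁻¹ = t + t ^ 2) →
      z ∈ Set.range (algebraMap k k₂) ∧ z' ∈ Set.range (algebraMap k k₂)) ∧
    (¬ (∃ t : k, (a * v ^ 5)⁻¹ = t + t ^ 2) →
      z ∉ Set.range (algebraMap k k₂) ∧ z' ∉ Set.range (algebraMap k k₂) ∧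
      ∃ σ : k₂ ≃ₐ[k] k₂, σ z = z') := by
  have hv0 : v ≠ 0 := by rintro rfl; simp at hv
  have : CharP k₂ 2 := charP_of_injective_algebraMap (algebraMap k k₂).injective 2
  have hquad {w w' : k₂} (hw : algebraMap k k₂ (a ^ 2) * w ^ 5 + algebraMap k k₂ (b ^ 2) * w
      + algebraMap k k₂ a = 0) (hw' : algebraMap k k₂ (a ^ 2) * w' ^ 5
      + algebraMap k k₂ (b ^ 2) * w' + algebraMap k k₂ a = 0) (hs : w + w' = algebraMap k k₂ v) :
      w ^ 2 + algebraMap k k₂ v * w + algebraMap k k₂ ((a * v ^ 3)⁻¹) = 0 := by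
    simp only [map_pow] at hw hw'
    simpa using sq_add_mul_add_inv_eq_zero_of_quintic_roots (by simpa using ha)
      (by simpa using hv0) hw hw' hs
  have hzq := hquad hz hz' hsum
  have hz'q := hquad hz' hz (by rw [add_comm, hsum])
  have hAS : (∃ u, u ^ 2 + v * u + (a * v ^ 3)⁻¹ = 0) ↔ ∃ t : k, (a * v ^ 5)⁻¹ = t + t ^ 2 := by
    rw [exists_sq_add_mul_add_eq_zero_iff hv0]
    ring_nf
  have hzK := (mem_range_algebraMap_iff_exists_root hzq).trans hAS
  have hz'K := (mem_range_algebraMap_iff_exists_root hz'q).trans hAS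
  exact ⟨⟨hzq, hz'q⟩, fun h => ⟨hzK.2 h, hz'K.2 h⟩, fun h =>
    ⟨mt hzK.1 h, mt hz'K.1 h, exists_algEquiv_of_sq_add_mul_add_eq_zero hzq hz'q (mt hzK.1 h)⟩⟩

/-- `k` a finite field of characteristic 2, `k₂` its quadratic extension.  If
`v ∈ k` satisfies `v⁵P(v) = 1` and `v = z + z'` with `z, z'` roots of
`P(x) = a²x⁵ + b²x + a`, then `z, z'` are the roots of `T² + vT + (av³)⁻¹`;
they lie in `k` if `(av⁵)⁻¹ ∈ AS(k)`, and otherwise they lie in `k₂ \ k` and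
are conjugate over `k`. -/
theorem stmt_9 (k k₂ : Type*) [Field k] [Fintype k] [CharP k 2]
    [Field k₂] [Fintype k₂] [Algebra k k₂] (hdim : Module.finrank k k₂ = 2)
    (a b v : k) (ha : a ≠ 0)
    (hv : v ^ 5 * (a ^ 2 * v ^ 5 + b ^ 2 * v + a) = 1)
    (z z' : k₂)
    (hz : algebraMap k k₂ (a ^ 2) * z ^ 5 + algebraMap k k₂ (b ^ 2) * z
            + algebraMap k k₂ a = 0)
    (hz' : algebraMap k k₂ (a ^ 2) * z' ^ 5 + algebraMap k k₂ (b ^ 2) * z'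
            + algebraMap k k₂ a = 0)
    (hsum : z + z' = algebraMap k k₂ v) :
    (z ^ 2 + algebraMap k k₂ v * z + algebraMap k k₂ ((a * v ^ 3)⁻¹) = 0 ∧
     z' ^ 2 + algebraMap k k₂ v * z' + algebraMap k k₂ ((a * v ^ 3)⁻¹) = 0) ∧
    ((∃ t : k, (a * v ^ 5)⁻¹ = t + t ^ 2) →
      z ∈ Set.range (algebraMap k k₂) ∧ z' ∈ Set.range (algebraMap k k₂)) ∧
    (¬ (∃ t : k, (a * v ^ 5)⁻¹ = t + t ^ 2) →
      z ∉ Set.range (algebraMap k k₂) ∧ z' ∉ Set.range (algebraMap k k₂) ∧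
      ∃ σ : k₂ ≃ₐ[k] k₂, σ z = z') :=
  stmt_9_general k k₂ a b v ha hv z z' hz hz' hsum
end

section
/- Let $k$ be a finite field of characteristic 2 and $e\in k^*$. If $e$ is not a cube in $k^*$, then $x^4+x^3+x^2+x+e$ factors over $k$ as a product of an irreducible linear factor and an irreducible cubic factor. -/
open Polynomial Set

/-! In characteristic 2, `X⁴ + X³ + X² + X = X (X + 1)³`, so the roots of the quartic are the
solutions of `ψ x = e` for `ψ x = x (x + 1)³`. As `ψ x ≡ x` modulo cubes, `ψ` maps non-cubes to
non-cubes, and it is injective there: `ψ x = ψ y` with `x ≠ y` forces `x y = (x + y + 1)³`, which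
makes `ψ x ^ 2 = ψ x * ψ y` a cube, hence `x` a cube. On a finite field `ψ` therefore permutes the
non-cubes, so the quartic has exactly one root `a`, and `a` is simple. The cofactor of `X - a` is
then a cubic without roots, hence irreducible. -/

section Cubes

theorem add_one_ne_zero_of_not_cube {R : Type*} [Ring R] {x : R} (hx : ¬ ∃ c, c ^ 3 = x) :
    x + 1 ≠ 0 :=
  fun h ↦ hx ⟨-1, by rw [eq_neg_of_add_eq_zero_left h]; norm_num⟩

variable {K : Type*} [Field K]

theorem exists_pow_three_eq_of_mul_pow_three {x y c : K} (hy : y ≠ 0) (h : c ^ 3 = x * y ^ 3) :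
    ∃ d, d ^ 3 = x :=
  ⟨c / y, by rw [div_pow, h]; field_simp⟩

theorem exists_pow_three_eq_of_sq {x c : K} (h : c ^ 3 = x ^ 2) : ∃ d, d ^ 3 = x := by
  rcases eq_or_ne c 0 with rfl | hc
  · obtain rfl : x = 0 := by simpa using h.symm
    exact ⟨0, zero_pow three_ne_zero⟩
  · have hx : x ≠ 0 := by rintro rfl; simp_all
    exact ⟨x / c, by rw [div_pow, h]; field_simp⟩

theorem mapsTo_mul_add_one_pow_three :
    MapsTo (fun x : K ↦ x * (x + 1) ^ 3) (range fun c : K ↦ c ^ 3)ᶜ (range fun c : K ↦ c ^ 3)ᶜ :=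
  fun _ hx ⟨_, hc⟩ ↦ hx (exists_pow_three_eq_of_mul_pow_three (add_one_ne_zero_of_not_cube hx) hc)

end Cubes

theorem pow_four_add_pow_three_add_sq_add_self {R : Type*} [CommRing R] [CharP R 2] (x : R) :
    x ^ 4 + x ^ 3 + x ^ 2 + x = x * (x + 1) ^ 3 := by
  linear_combination (-x ^ 3 - x ^ 2) * CharTwo.two_eq_zero (R := R)

section CharTwo

variable {K : Type*} [Field K] [CharP K 2]

theorem injOn_mul_add_one_pow_three :
    InjOn (fun x : K ↦ x * (x + 1) ^ 3) (range fun c : K ↦ c ^ 3)ᶜ := by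
  intro x hx y _ hxy
  simp only at hxy
  by_contra hne
  have hprod : x * y = (x + y + 1) ^ 3 := by
    -- in characteristic 2, `x (x + 1)³ + y (y + 1)³ = (x + y) (x y + (x + y + 1)³)`
    have h : (x + y) * (x * y + (x + y + 1) ^ 3) = 0 := by
      linear_combination hxy + (5 * x ^ 2 * y + 2 * x ^ 3 * y + 3 * x ^ 2 * y ^ 2
        + 2 * x * y ^ 3 + 5 * x * y ^ 2 + 3 * x * y + y ^ 4 + 3 * y ^ 3 + 3 * y ^ 2 + y) *
        CharTwo.two_eq_zero (R := K)
    have hsum : x + y ≠ 0 := fun h ↦ hne (CharTwo.add_eq_zero.mp h)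
    exact CharTwo.add_eq_zero.mp ((mul_eq_zero.mp h).resolve_left hsum)
  have hsq : ((x + y + 1) * ((x + y + 1) ^ 3 + x + y + 1)) ^ 3 = (x * (x + 1) ^ 3) ^ 2 :=
    calc _ = x * y * (x * y + x + y + 1) ^ 3 := by rw [hprod]; ring
      _ = (x * (x + 1) ^ 3) * (y * (y + 1) ^ 3) := by ring
      _ = (x * (x + 1) ^ 3) ^ 2 := by rw [← hxy]; ring
  obtain ⟨d, hd⟩ := exists_pow_three_eq_of_sq hsq
  exact hx (exists_pow_three_eq_of_mul_pow_three (add_one_ne_zero_of_not_cube hx) hd)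

theorem existsUnique_mul_add_one_pow_three_eq [Finite K] {e : K} (he : ¬ ∃ c, c ^ 3 = e) :
    ∃! a, a * (a + 1) ^ 3 = e := by
  have hbij := ((toFinite _).injOn_iff_bijOn_of_mapsTo mapsTo_mul_add_one_pow_three).mp
    (injOn_mul_add_one_pow_three (K := K))
  obtain ⟨a, ha, rfl⟩ := hbij.surjOn he
  refine ⟨a, rfl, fun r hr ↦ injOn_mul_add_one_pow_three ?_ ha hr⟩
  rintro ⟨c, rfl⟩
  exact he ⟨c * (c ^ 3 + 1), by rw [← hr]; ring⟩

end CharTwo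

/-- The quotient of `X (X + 1)³ - a (a + 1)³` by `X - a`, reduced modulo 2. -/
noncomputable def cubicFactor {R : Type*} [CommRing R] (a : R) : R[X] :=
  X ^ 3 + C (a + 1) * X ^ 2 + C (a ^ 2 + a + 1) * X + C (a ^ 3 + a ^ 2 + a + 1)

section CubicFactor

variable {R : Type*} [CommRing R] (a : R)

theorem monic_cubicFactor [Nontrivial R] : (cubicFactor a).Monic := by
  unfold cubicFactor; monicity!

theorem natDegree_cubicFactor [Nontrivial R] : (cubicFactor a).natDegree = 3 := by
  unfold cubicFactor; compute_degree!

theorem degree_cubicFactor [Nontrivial R] : (cubicFactor a).degree = 3 := by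
  unfold cubicFactor; compute_degree!

variable [CharP R 2]

theorem X_sub_C_mul_cubicFactor :
    (X - C a) * cubicFactor a = X ^ 4 + X ^ 3 + X ^ 2 + X + C (a * (a + 1) ^ 3) := by
  unfold cubicFactor
  simp only [map_add, map_mul, map_pow, map_one]
  linear_combination (-(C a) - 2 * C a ^ 2 - 2 * C a ^ 3 - C a ^ 4) *
    CharTwo.two_eq_zero (R := R[X])

theorem eval_cubicFactor_self : (cubicFactor a).eval a = (a + 1) ^ 2 := by
  simp only [cubicFactor, eval_add, eval_mul, eval_pow, eval_X, eval_C]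
  linear_combination (2 * a ^ 3 + a ^ 2) * CharTwo.two_eq_zero (R := R)

end CubicFactor

theorem stmt_10_general (k : Type*) [Field k] [Fintype k] [CharP k 2]
    (e : k) (hcube : ¬ ∃ c : k, c ^ 3 = e) :
    ∃ f g : k[X], f.Monic ∧ f.degree = 1 ∧ g.Monic ∧ g.degree = 3 ∧
      Irreducible g ∧ (X ^ 4 + X ^ 3 + X ^ 2 + X + C e : k[X]) = f * g := by
  obtain ⟨a, rfl, huniq⟩ := existsUnique_mul_add_one_pow_three_eq hcube
  refine ⟨X - C a, cubicFactor a, monic_X_sub_C a, degree_X_sub_C a, monic_cubicFactor a,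
    degree_cubicFactor a, ?_, (X_sub_C_mul_cubicFactor a).symm⟩
  refine irreducible_of_degree_le_three_of_not_isRoot (by simp [natDegree_cubicFactor])
    fun r hr ↦ ?_
  have hquartic : r ^ 4 + r ^ 3 + r ^ 2 + r + a * (a + 1) ^ 3 = 0 := by
    simpa [hr.eq_zero] using (congrArg (eval r) (X_sub_C_mul_cubicFactor a)).symm
  rw [pow_four_add_pow_three_add_sq_add_self, CharTwo.add_eq_zero] at hquartic
  obtain rfl := huniq r hquartic
  rw [IsRoot, eval_cubicFactor_self, sq_eq_zero_iff] at hr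
  exact hcube ⟨0, by rw [hr]; ring⟩

theorem stmt_10 (k : Type*) [Field k] [Fintype k] [CharP k 2]
    (e : k) (he : e ≠ 0) (hcube : ¬ ∃ c : k, c ^ 3 = e) :
    ∃ f g : k[X], f.Monic ∧ f.degree = 1 ∧ g.Monic ∧ g.degree = 3 ∧
      Irreducible g ∧ (X ^ 4 + X ^ 3 + X ^ 2 + X + C e : k[X]) = f * g :=
  stmt_10_general k e hcube
end

section
/- Let $k$ be a finite field of characteristic 2. If $x^4+x^3+x^2+x+e=(x^2+ux+s)(x^2+(u+1)x+t)$ in $k[x]$, then $s=(u+1)^3$, $t=u^3$ and $e=(u+u^2)^3$. In particular, $x^4+x^3+x^2+x+e$ factors as a product of two monic quadratics over $k$ if and only if $e=\lambda^3$ for some $\lambda\in\mathrm{AS}(k)$. -/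
open Polynomial

lemma expand_quad {k : Type*} [Field k] (a b a' b' : k) :
    (X ^ 2 + C a * X + C b) * (X ^ 2 + C a' * X + C b')
      = X ^ 4 + C (a + a') * X ^ 3 + C (b + b' + a * a') * X ^ 2
          + C (a * b' + a' * b) * X + C (b * b') := by
  simp only [C_add, C_mul]; ring

lemma coeffs_eq {k : Type*} [Field k] (w3 w2 w1 w0 e : k)
    (h : (X ^ 4 + X ^ 3 + X ^ 2 + X + C e : k[X])
        = X ^ 4 + C w3 * X ^ 3 + C w2 * X ^ 2 + C w1 * X + C w0) :
    w3 = 1 ∧ w2 = 1 ∧ w1 = 1 ∧ w0 = e := by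
  refine ⟨?_, ?_, ?_, ?_⟩
  · have := congrArg (fun p => coeff p 3) h
    simpa [coeff_X] using this.symm
  · have := congrArg (fun p => coeff p 2) h
    simpa [coeff_X] using this.symm
  · have := congrArg (fun p => coeff p 1) h
    simpa [coeff_X] using this.symm
  · have := congrArg (fun p => coeff p 0) h
    simpa [coeff_X] using this.symm

lemma quad_form {k : Type*} [Field k] (f : k[X]) (hm : f.Monic) (hd : f.degree = 2) :
    f = X ^ 2 + C (f.coeff 1) * X + C (f.coeff 0) := by
  have hnd : f.natDegree = 2 := natDegree_eq_of_degree_eq_some hd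
  have h2 : f.coeff 2 = 1 := by rw [← hnd]; exact hm.coeff_natDegree
  conv_lhs => rw [f.as_sum_range' 3 (by omega)]
  simp only [Finset.sum_range_succ, Finset.sum_range_zero, zero_add, ← C_mul_X_pow_eq_monomial,
    h2, map_one, one_mul, pow_zero, pow_one, mul_one]
  ring

lemma deg_lin {k : Type*} [Field k] (a b : k) :
    degree (C a * X + C b : k[X]) < (2 : ℕ) := by
  apply lt_of_le_of_lt (degree_add_le _ _)
  simp only [sup_lt_iff]
  constructor
  · exact lt_of_le_of_lt (degree_C_mul_X_le a) (by norm_num)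
  · exact lt_of_le_of_lt (degree_C_le) (by norm_num)

theorem stmt_12 (k : Type*) [Field k] [Fintype k] [CharP k 2] (e : k) :
    (∀ u s t : k,
      (X ^ 4 + X ^ 3 + X ^ 2 + X + C e : k[X])
          = (X ^ 2 + C u * X + C s) * (X ^ 2 + C (u + 1) * X + C t) →
        s = (u + 1) ^ 3 ∧ t = u ^ 3 ∧ e = (u + u ^ 2) ^ 3) ∧
    ((∃ f g : k[X], f.Monic ∧ f.degree = 2 ∧ g.Monic ∧ g.degree = 2 ∧
        (X ^ 4 + X ^ 3 + X ^ 2 + X + C e : k[X]) = f * g) ↔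
      ∃ u : k, e = (u + u ^ 2) ^ 3) := by
  have hc : (2 : k) = 0 := by
    have := CharP.cast_eq_zero k 2
    simpa using this
  have main : ∀ u s t : k,
      (X ^ 4 + X ^ 3 + X ^ 2 + X + C e : k[X])
          = (X ^ 2 + C u * X + C s) * (X ^ 2 + C (u + 1) * X + C t) →
        s = (u + 1) ^ 3 ∧ t = u ^ 3 ∧ e = (u + u ^ 2) ^ 3 := by
    intro u s t h
    rw [expand_quad] at h
    obtain ⟨h3, h2, h1, h0⟩ := coeffs_eq _ _ _ _ _ h
    have hs : s = (u + 1) ^ 3 := by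
      linear_combination h1 - u * h2 - (u ^ 2 + 2 * u) * hc
    have ht : t = u ^ 3 := by
      linear_combination h2 - hs - (u ^ 3 + 2 * u ^ 2 + 2 * u) * hc
    refine ⟨hs, ht, ?_⟩
    linear_combination -h0 + t * hs + (u + 1) ^ 3 * ht
  refine ⟨main, ?_, ?_⟩
  · rintro ⟨f, g, hfm, hfd, hgm, hgd, h⟩
    rw [quad_form f hfm hfd, quad_form g hgm hgd, expand_quad] at h
    obtain ⟨h3, h2, h1, h0⟩ := coeffs_eq _ _ _ _ _ h
    have ha' : g.coeff 1 = f.coeff 1 + 1 := by linear_combination h3 - f.coeff 1 * hc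
    rw [← expand_quad, ha'] at h
    obtain ⟨hs, ht, he⟩ := main _ _ _ h
    exact ⟨f.coeff 1, he⟩
  · rintro ⟨u, rfl⟩
    refine ⟨X ^ 2 + C u * X + C ((u + 1) ^ 3), X ^ 2 + C (u + 1) * X + C (u ^ 3),
      ?_, ?_, ?_, ?_, ?_⟩
    · rw [add_assoc]; exact monic_X_pow_add (deg_lin u ((u + 1) ^ 3))
    · rw [add_assoc]
      have : degree (X ^ 2 : k[X]) = 2 := by simp
      rw [← this]
      exact degree_add_eq_left_of_degree_lt (by rw [this]; exact deg_lin _ _)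
    · rw [add_assoc]; exact monic_X_pow_add (deg_lin (u + 1) (u ^ 3))
    · rw [add_assoc]
      have : degree (X ^ 2 : k[X]) = 2 := by simp
      rw [← this]
      exact degree_add_eq_left_of_degree_lt (by rw [this]; exact deg_lin _ _)
    · rw [expand_quad]
      have e3 : u + (u + 1) = 1 := by linear_combination u * hc
      have e2 : (u + 1) ^ 3 + u ^ 3 + u * (u + 1) = 1 := by
        linear_combination (u ^ 3 + 2 * u ^ 2 + 2 * u) * hc
      have e1 : u * u ^ 3 + (u + 1) * (u + 1) ^ 3 = 1 := by
        linear_combination (u ^ 4 + 2 * u ^ 3 + 3 * u ^ 2 + 2 * u) * hc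
      have e0 : (u + 1) ^ 3 * u ^ 3 = (u + u ^ 2) ^ 3 := by ring
      rw [e3, e2, e1, e0]
      simp
end

section
/- Let $k=\mathbb{F}_{2^m}$ with $m$ odd and $e\in k^*$, $e=\lambda^3$ with $\lambda\in k$ (which is unique since cubing is bijective). If $\lambda\notin\mathrm{AS}(k)$ then $x^4+x^3+x^2+x+e$ is irreducible over $k$; if $\lambda\in\mathrm{AS}(k)$ then it factors as (linear)(linear)(irreducible quadratic). -/
/-!
Write `℘ t = t + t²`, additive in characteristic 2, and `f = X⁴ + X³ + X² + X + λ³`. If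
`u (y + 1) = λ y` then `(y + 1)⁴ (u⁴ + u + λ⁴) = λ f(y)`, so this Möbius substitution matches the
roots of `f` with the solutions of `u⁴ + u = λ⁴`, and `u⁴ + u = ℘ (℘ u)`.

Since `m` is odd, cubing is injective on `k`. Hence `1 ∉ ℘(k)`, the only roots of `u⁴ + u` in `k`
are `0` and `1`, and `℘(k)` has index `#ker ℘ = 2`. So `λ⁴ ∈ ℘(℘(k))` iff `λ ∈ ℘(k)`, and then `f`
has exactly two roots, both simple because `f - (X² + X) f' = λ³`. Finally a factorisation
`f = (X² + aX + b)(X² + cX + d)` forces `λ³ = (a + a²)³`, i.e. `λ = ℘ a`.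
-/

open Polynomial

theorem Nat.coprime_three_two_pow_sub_one {m : ℕ} (hm : Odd m) : Nat.Coprime 3 (2 ^ m - 1) := by
  rw [Nat.Prime.coprime_iff_not_dvd Nat.prime_three, ← ZMod.natCast_eq_zero_iff,
    Nat.cast_sub Nat.one_le_two_pow, Nat.cast_pow, Nat.cast_two,
    show (2 : ZMod 3) = -1 from rfl, hm.neg_one_pow]
  decide

theorem FiniteField.pow_injective_of_coprime {K : Type*} [Field K] [Fintype K] {n : ℕ}
    (hn0 : n ≠ 0) (hn : n.Coprime (Fintype.card K - 1)) :
    Function.Injective fun x : K => x ^ n := by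
  intro a b (hab : a ^ n = b ^ n)
  rcases eq_or_ne b 0 with rfl | hb
  · exact (pow_eq_zero_iff hn0).1 (hab.trans (zero_pow hn0))
  have hn1 : (a / b) ^ n = 1 := by rw [div_pow, hab, div_self (pow_ne_zero _ hb)]
  have hq1 : (a / b) ^ (Fintype.card K - 1) = 1 := by
    refine FiniteField.pow_card_sub_one_eq_one _ fun h => ?_
    rw [h, zero_pow hn0] at hn1
    exact zero_ne_one hn1
  have h1 : a / b = 1 := by simpa [hn] using pow_gcd_eq_one.2 ⟨hn1, hq1⟩
  exact (div_eq_one_iff_eq hb).1 h1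

def artinSchreier (k : Type*) [CommRing k] [CharP k 2] : k →+ k where
  toFun x := x + x ^ 2
  map_zero' := by simp
  map_add' x y := by rw [CharTwo.add_sq]; ring

section ArtinSchreier

variable {k : Type*} [Field k] [CharP k 2]

@[simp]
theorem artinSchreier_apply (x : k) : artinSchreier k x = x + x ^ 2 := rfl

theorem mem_range_artinSchreier {a : k} :
    a ∈ (artinSchreier k).range ↔ ∃ t, a = t + t ^ 2 := by
  simp [eq_comm]

theorem artinSchreier_eq_zero_iff {x : k} : artinSchreier k x = 0 ↔ x = 0 ∨ x = 1 := by
  rw [artinSchreier_apply, ← CharTwo.sub_eq_add, sub_eq_zero, sq, eq_comm]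
  exact IsIdempotentElem.iff_eq_zero_or_one

theorem card_ker_artinSchreier : Nat.card (artinSchreier k).ker = 2 := by
  have : ((artinSchreier k).ker : Set k) = {0, 1} := by
    ext x
    simp only [SetLike.mem_coe, AddMonoidHom.mem_ker, artinSchreier_eq_zero_iff,
      Set.mem_insert_iff, Set.mem_singleton_iff]
  rw [← SetLike.coe_sort_coe, this, Nat.card_coe_set_eq, Set.ncard_pair zero_ne_one]

theorem artinSchreier_sq (x : k) : artinSchreier k (x ^ 2) = artinSchreier k x ^ 2 := by
  simp only [artinSchreier_apply, CharTwo.add_sq]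

theorem artinSchreier_artinSchreier (x : k) : artinSchreier k (artinSchreier k x) = x ^ 4 + x := by
  simp only [artinSchreier_apply]; grind

theorem sq_mem_range_artinSchreier_iff [PerfectRing k 2] {a : k} :
    a ^ 2 ∈ (artinSchreier k).range ↔ a ∈ (artinSchreier k).range := by
  refine ⟨fun ⟨t, ht⟩ => ?_, fun ⟨t, ht⟩ => ⟨t ^ 2, by rw [artinSchreier_sq, ht]⟩⟩
  obtain ⟨r, rfl⟩ := surjective_frobenius k 2 t
  rw [frobenius_def, artinSchreier_sq] at ht
  exact ⟨r, frobenius_inj k 2 ht⟩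

theorem mem_range_artinSchreier_of_pow_four_add_self_eq [PerfectRing k 2] {a v : k}
    (hv : v ^ 4 + v = a ^ 4) : a ∈ (artinSchreier k).range := by
  rw [← sq_mem_range_artinSchreier_iff, ← sq_mem_range_artinSchreier_iff, ← pow_mul]
  exact ⟨artinSchreier k v, by rw [artinSchreier_artinSchreier, hv]⟩

theorem one_notMem_range_artinSchreier (hcube : Function.Injective fun x : k => x ^ 3) :
    (1 : k) ∉ (artinSchreier k).range := by
  rintro ⟨t, ht⟩
  rw [artinSchreier_apply] at ht
  have ht1 : t = 1 := hcube (show t ^ 3 = 1 ^ 3 by grind)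
  subst ht1
  grind

theorem eq_or_eq_add_one_of_pow_four_add_self_eq (hcube : Function.Injective fun x : k => x ^ 3)
    {u w : k} (h : u ^ 4 + u = w ^ 4 + w) : u = w ∨ u = w + 1 := by
  have hx : (u + w) * ((u + w) ^ 3 - 1) = 0 := by grind
  rcases mul_eq_zero.1 hx with hx | hx
  · left; grind
  · right
    have : u + w = 1 := hcube (show (u + w) ^ 3 = 1 ^ 3 by grind)
    grind

variable [Finite k]

theorem index_range_artinSchreier : (artinSchreier k).range.index = 2 := by
  rw [AddSubgroup.index_range, card_ker_artinSchreier]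

theorem add_one_mem_range_artinSchreier_iff (h1 : (1 : k) ∉ (artinSchreier k).range) {a : k} :
    a + 1 ∈ (artinSchreier k).range ↔ a ∉ (artinSchreier k).range := by
  rw [AddSubgroup.add_mem_iff_of_index_two index_range_artinSchreier]
  tauto

theorem exists_pow_four_add_self_eq_pow_four
    (hcube : Function.Injective fun x : k => x ^ 3) {a : k} (ha : a ∈ (artinSchreier k).range) :
    ∃ v : k, v ^ 4 + v = a ^ 4 := by
  obtain ⟨t, rfl⟩ := ha
  have hs : t ^ 4 ∈ (artinSchreier k).range ∨ t ^ 4 + 1 ∈ (artinSchreier k).range := by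
    rw [add_one_mem_range_artinSchreier_iff (one_notMem_range_artinSchreier hcube)]
    exact em _
  -- `℘ (t⁴ + 1) = ℘ (t⁴) = (℘ t)⁴`, so either preimage works.
  obtain ⟨v, hv⟩ | ⟨v, hv⟩ := hs
  all_goals
    refine ⟨v, ?_⟩
    rw [← artinSchreier_artinSchreier, hv]
    simp only [artinSchreier_apply]
    grind

end ArtinSchreier

theorem Polynomial.Monic.eq_X_sq_add_C_mul_X_add_C {R : Type*} [Semiring R] {p : R[X]}
    (hp : p.Monic) (hdeg : p.natDegree = 2) :
    p = X ^ 2 + C (p.coeff 1) * X + C (p.coeff 0) := by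
  conv_lhs => rw [hp.as_sum, hdeg]
  simp [Finset.sum_range_succ, add_assoc, add_comm (C (p.coeff 0))]

theorem Polynomial.exists_eq_X_sub_C_mul_X_sub_C_mul_irreducible {K : Type*} [Field K]
    {f : K[X]} (hf : f.Monic) (hdeg : f.natDegree = 4) (hsq : Squarefree f) {z₁ z₂ : K}
    (hne : z₁ ≠ z₂) (hroots : ∀ y, f.IsRoot y ↔ y = z₁ ∨ y = z₂) :
    ∃ g : K[X], g.Monic ∧ g.natDegree = 2 ∧ Irreducible g ∧
      f = (X - C z₁) * (X - C z₂) * g := by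
  have hcop : IsCoprime (X - C z₁) (X - C z₂) :=
    pairwise_coprime_X_sub_C (s := id) (fun _ _ h => h) hne
  obtain ⟨g, hfg⟩ := hcop.mul_dvd (dvd_iff_isRoot.2 ((hroots z₁).2 (.inl rfl)))
    (dvd_iff_isRoot.2 ((hroots z₂).2 (.inr rfl)))
  have hlin : ((X - C z₁) * (X - C z₂)).Monic := (monic_X_sub_C z₁).mul (monic_X_sub_C z₂)
  have hg : g.Monic := hlin.of_mul_monic_left (hfg ▸ hf)
  have hgdeg : g.natDegree = 2 := by
    have := congrArg natDegree hfg
    rw [hlin.natDegree_mul hg, (monic_X_sub_C z₁).natDegree_mul (monic_X_sub_C z₂),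
      natDegree_X_sub_C, natDegree_X_sub_C, hdeg] at this
    omega
  refine ⟨g, hg, hgdeg, ?_, hfg⟩
  rw [hg.irreducible_iff_roots_eq_zero_of_degree_le_three (by omega) (by omega)]
  refine Multiset.eq_zero_of_forall_notMem fun c hc => ?_
  have hgc : X - C c ∣ g := dvd_iff_isRoot.2 (isRoot_of_mem_roots hc)
  have hfc : f.IsRoot c := by
    rw [hfg, IsRoot, eval_mul, (isRoot_of_mem_roots hc).eq_zero, mul_zero]
  apply not_isUnit_X_sub_C c
  apply hsq
  rcases (hroots c).1 hfc with rfl | rfl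
  · rw [hfg, mul_assoc]
    exact mul_dvd_mul_left _ (dvd_mul_of_dvd_right hgc _)
  · rw [hfg, mul_comm (X - C z₁), mul_assoc]
    exact mul_dvd_mul_left _ (dvd_mul_of_dvd_right hgc _)

theorem quartic_monic {R : Type*} [CommRing R] [Nontrivial R] (e : R) :
    (X ^ 4 + X ^ 3 + X ^ 2 + X + C e : R[X]).Monic := by
  monicity!

theorem quartic_natDegree {R : Type*} [CommRing R] [Nontrivial R] (e : R) :
    (X ^ 4 + X ^ 3 + X ^ 2 + X + C e : R[X]).natDegree = 4 := by
  compute_degree!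

section Quartic

variable {k : Type*} [Field k] [CharP k 2] {l : k}

theorem quartic_separable {e : k} (he : e ≠ 0) :
    (X ^ 4 + X ^ 3 + X ^ 2 + X + C e : k[X]).Separable := by
  have hd : derivative (X ^ 4 + X ^ 3 + X ^ 2 + X + C e : k[X]) = X ^ 2 + 1 := by
    simp only [derivative_add, derivative_X_pow, derivative_X, derivative_C, map_natCast]
    grind
  rw [separable_def', hd]
  refine ⟨C e⁻¹, C e⁻¹ * (X ^ 2 + X), ?_⟩
  have : C e⁻¹ * C e = (1 : k[X]) := by rw [← C_mul, inv_mul_cancel₀ he, C_1]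
  grind

theorem eq_cube_of_quartic_eq_mul {a b c d e : k}
    (h : (X ^ 4 + X ^ 3 + X ^ 2 + X + C e : k[X]) =
      (X ^ 2 + C a * X + C b) * (X ^ 2 + C c * X + C d)) :
    e = (a + a ^ 2) ^ 3 := by
  have hexp : (X ^ 2 + C a * X + C b) * (X ^ 2 + C c * X + C d) =
      X ^ 4 + C (a + c) * X ^ 3 + C (b + d + a * c) * X ^ 2 + C (a * d + b * c) * X +
        C (b * d) := by
    simp only [C_add, C_mul]
    ring
  rw [hexp] at h
  have h3 := congrArg (coeff · 3) h
  have h2 := congrArg (coeff · 2) h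
  have h1 := congrArg (coeff · 1) h
  have h0 := congrArg (coeff · 0) h
  simp only [coeff_add, coeff_C_mul, coeff_X_pow, coeff_X, coeff_C] at h3 h2 h1 h0
  norm_num at h3 h2 h1 h0
  obtain rfl : c = a + 1 := by grind
  obtain rfl : b = 1 + a + a ^ 2 + a ^ 3 := by grind
  obtain rfl : d = a ^ 3 := by grind
  grind

theorem quartic_eval_eq_zero_iff (hl : l ≠ 0) {u y : k} (hrel : u * (y + 1) = l * y) :
    y ^ 4 + y ^ 3 + y ^ 2 + y + l ^ 3 = 0 ↔ u ^ 4 + u = l ^ 4 := by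
  have hy : y + 1 ≠ 0 := fun hy => hl (by grind)
  have key : (y + 1) ^ 4 * (u ^ 4 + u + l ^ 4) = l * (y ^ 4 + y ^ 3 + y ^ 2 + y + l ^ 3) := by
    grind
  rw [← mul_eq_zero_iff_left hl, ← key, mul_eq_zero_iff_left (pow_ne_zero 4 hy),
    ← CharTwo.sub_eq_add, sub_eq_zero]

theorem exists_pow_four_add_self_of_quartic_eval_eq_zero (hl : l ≠ 0) {y : k}
    (hy : y ^ 4 + y ^ 3 + y ^ 2 + y + l ^ 3 = 0) :
    ∃ u : k, u ^ 4 + u = l ^ 4 ∧ u * (y + 1) = l * y := by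
  have hy1 : y + 1 ≠ 0 := fun h => hl (pow_eq_zero_iff three_ne_zero |>.1 (by grind))
  have hrel : l * y / (y + 1) * (y + 1) = l * y := div_mul_cancel₀ _ hy1
  exact ⟨_, (quartic_eval_eq_zero_iff hl hrel).1 hy, hrel⟩

theorem add_ne_zero_of_pow_four_add_self_eq (hl : l ≠ 0) {u : k} (hu : u ^ 4 + u = l ^ 4) :
    u + l ≠ 0 := by
  intro h
  obtain rfl : u = l := by grind
  grind

theorem mul_add_one_eq_mul_iff {u y : k} (hul : u + l ≠ 0) :
    u * (y + 1) = l * y ↔ y = u / (u + l) := by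
  rw [eq_div_iff hul]
  constructor <;> intro h <;> grind

theorem quartic_roots (hcube : Function.Injective fun x : k => x ^ 3) (hl : l ≠ 0) {v : k}
    (hv : v ^ 4 + v = l ^ 4) : ∃ z₁ z₂ : k, z₁ ≠ z₂ ∧
      ∀ y, y ^ 4 + y ^ 3 + y ^ 2 + y + l ^ 3 = 0 ↔ y = z₁ ∨ y = z₂ := by
  have hv' : (v + 1) ^ 4 + (v + 1) = l ^ 4 := by grind
  have hvl := add_ne_zero_of_pow_four_add_self_eq hl hv
  have hvl' := add_ne_zero_of_pow_four_add_self_eq hl hv'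
  refine ⟨v / (v + l), (v + 1) / (v + 1 + l), fun h => ?_, fun y => ⟨fun hy => ?_, ?_⟩⟩
  · rw [div_eq_div_iff hvl hvl'] at h
    exact hl (by grind)
  · obtain ⟨u, hu, hrel⟩ := exists_pow_four_add_self_of_quartic_eval_eq_zero hl hy
    obtain rfl | rfl := eq_or_eq_add_one_of_pow_four_add_self_eq hcube (hu.trans hv.symm)
    · exact .inl ((mul_add_one_eq_mul_iff hvl).1 hrel)
    · exact .inr ((mul_add_one_eq_mul_iff hvl').1 hrel)
  · rintro (rfl | rfl)
    · exact (quartic_eval_eq_zero_iff hl ((mul_add_one_eq_mul_iff hvl).2 rfl)).2 hv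
    · exact (quartic_eval_eq_zero_iff hl ((mul_add_one_eq_mul_iff hvl').2 rfl)).2 hv'

theorem quartic_irreducible [Finite k] (hcube : Function.Injective fun x : k => x ^ 3)
    (hl : l ≠ 0) (hAS : l ∉ (artinSchreier k).range) :
    Irreducible (X ^ 4 + X ^ 3 + X ^ 2 + X + C (l ^ 3) : k[X]) := by
  have hf := quartic_monic (l ^ 3)
  have hf1 : (X ^ 4 + X ^ 3 + X ^ 2 + X + C (l ^ 3) : k[X]) ≠ 1 := fun h => by
    simpa using (quartic_natDegree (l ^ 3)).symm.trans (congrArg natDegree h)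
  rw [hf.irreducible_iff_lt_natDegree_lt hf1, quartic_natDegree]
  intro q hq hqdeg ⟨r, hqr⟩
  obtain hq1 | hq2 : q.natDegree = 1 ∨ q.natDegree = 2 := by
    simp only [Finset.mem_Ioc] at hqdeg; omega
  · have hdvd : X - C (q.coeff 0) ∣ X ^ 4 + X ^ 3 + X ^ 2 + X + C (l ^ 3) := by
      rw [CharTwo.sub_eq_add, ← hq.eq_X_add_C hq1]
      exact ⟨r, hqr⟩
    have hy := dvd_iff_isRoot.1 hdvd
    simp only [IsRoot, eval_add, eval_pow, eval_X, eval_C] at hy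
    obtain ⟨u, hu, -⟩ := exists_pow_four_add_self_of_quartic_eval_eq_zero hl hy
    exact hAS (mem_range_artinSchreier_of_pow_four_add_self_eq hu)
  · have hr : r.Monic := hq.of_mul_monic_left (hqr ▸ hf)
    have hr2 : r.natDegree = 2 := by
      have := congrArg natDegree hqr
      rw [quartic_natDegree, hq.natDegree_mul hr, hq2] at this
      omega
    rw [hq.eq_X_sq_add_C_mul_X_add_C hq2, hr.eq_X_sq_add_C_mul_X_add_C hr2] at hqr
    exact hAS ⟨q.coeff 1, hcube (eq_cube_of_quartic_eq_mul hqr).symm⟩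

end Quartic

theorem stmt_14 (k : Type*) [Field k] [Fintype k] [CharP k 2]
    (m : ℕ) (hm : Odd m) (hq : Fintype.card k = 2 ^ m)
    (e lam : k) (he : e ≠ 0) (hlam : lam ^ 3 = e) :
    ((¬ ∃ t : k, lam = t + t ^ 2) →
      Irreducible (X ^ 4 + X ^ 3 + X ^ 2 + X + C e : k[X])) ∧
    ((∃ t : k, lam = t + t ^ 2) →
      ∃ z₁ z₂ : k, ∃ g : k[X], z₁ ≠ z₂ ∧ g.Monic ∧ g.degree = 2 ∧
        Irreducible g ∧
        (X ^ 4 + X ^ 3 + X ^ 2 + X + C e : k[X])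
          = (X + C z₁) * (X + C z₂) * g) := by
  have hcube : Function.Injective fun x : k => x ^ 3 :=
    FiniteField.pow_injective_of_coprime three_ne_zero (hq ▸ Nat.coprime_three_two_pow_sub_one hm)
  subst hlam
  have hl : lam ≠ 0 := fun h => he (by simp [h])
  simp_rw [← mem_range_artinSchreier]
  refine ⟨quartic_irreducible hcube hl, fun hAS => ?_⟩
  obtain ⟨v, hv⟩ := exists_pow_four_add_self_eq_pow_four hcube hAS
  obtain ⟨z₁, z₂, hne, hroots⟩ := quartic_roots hcube hl hv
  obtain ⟨g, hg, hgdeg, hgirr, hfg⟩ := exists_eq_X_sub_C_mul_X_sub_C_mul_irreducible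
    (quartic_monic _) (quartic_natDegree _) (quartic_separable he).squarefree hne
    (by simpa only [IsRoot, eval_add, eval_pow, eval_X, eval_C] using hroots)
  refine ⟨z₁, z₂, g, hne, hg, by rw [degree_eq_natDegree hg.ne_zero, hgdeg]; rfl, hgirr, ?_⟩
  simpa only [CharTwo.sub_eq_add] using hfg
end

section
/- Let $k=\mathbb{F}_{2^m}$ with $m$ odd and $a\in k^*$. Then $x^5+a^{-1}$ factors over $k$ as the product of a linear factor and an irreducible quartic factor. -/
/-!
Since `m` is odd, `2 ^ m` has order `4` modulo `5`. Hence `5 ∤ |kˣ| = 2 ^ m - 1`, so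
`a⁻¹ = z ^ 5` for some `z`, and, the degree of every irreducible factor of `Φ₅` over `k` being
that order, `Φ₅` is irreducible over `k`. In characteristic `2`,
`X ^ 5 + z ^ 5 = (X + z) · z ^ 4 Φ₅(X / z)`, and rescaling the roots of `Φ₅` by the unit `z`
preserves irreducibility.
-/

open Polynomial

namespace Polynomial

variable {R : Type*}

noncomputable def scaleRootsMulEquiv [CommSemiring R] [NoZeroDivisors R] (r : Rˣ) :
    R[X] ≃* R[X] where
  toFun p := p.scaleRoots r
  invFun p := p.scaleRoots ↑r⁻¹
  left_inv p := by simp [← scaleRoots_mul]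
  right_inv p := by simp [← scaleRoots_mul]
  map_mul' p q := mul_scaleRoots_of_noZeroDivisors p q r

theorem irreducible_scaleRoots_iff [CommSemiring R] [NoZeroDivisors R] {p : R[X]} (r : Rˣ) :
    Irreducible (p.scaleRoots r) ↔ Irreducible p :=
  MulEquiv.irreducible_iff (F := R[X] ≃* R[X]) (x := p) (scaleRootsMulEquiv r)

theorem X_pow_sub_C_scaleRoots [CommRing R] [Nontrivial R] {n : ℕ} (hn : n ≠ 0) (c s : R) :
    (X ^ n - C c).scaleRoots s = X ^ n - C (c * s ^ n) := by
  ext i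
  simp only [coeff_scaleRoots, natDegree_X_pow_sub_C, coeff_sub, coeff_X_pow, coeff_C]
  split_ifs <;> simp_all

theorem X_pow_sub_C_pow_eq_X_sub_C_mul_scaleRoots_cyclotomic [CommRing R] [IsDomain R]
    (p : ℕ) [Fact p.Prime] (s : R) :
    X ^ p - C (s ^ p) = (X - C s) * (cyclotomic p R).scaleRoots s := by
  calc X ^ p - C (s ^ p) = (X ^ p - C 1 : R[X]).scaleRoots s := by
        rw [X_pow_sub_C_scaleRoots (Fact.out : p.Prime).ne_zero, one_mul]
    _ = ((X - C 1) * cyclotomic p R).scaleRoots s := by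
        rw [map_one, mul_comm, cyclotomic_prime_mul_X_sub_one]
    _ = (X - C s) * (cyclotomic p R).scaleRoots s := by
        rw [mul_scaleRoots_of_noZeroDivisors, X_sub_C_scaleRoots, one_mul]

end Polynomial

theorem ZMod.two_pow_two_mul_of_odd {m : ℕ} (hm : Odd m) : (2 : ZMod 5) ^ (2 * m) = -1 := by
  rw [pow_mul, show (2 : ZMod 5) ^ 2 = -1 by decide, hm.neg_one_pow]

theorem ZMod.orderOf_unitOfCoprime_two_pow_of_odd {m : ℕ} (hm : Odd m)
    (h : Nat.Coprime (2 ^ m) 5) : orderOf (ZMod.unitOfCoprime (2 ^ m) h) = 4 := by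
  have h4 := ZMod.pow_totient (ZMod.unitOfCoprime (2 ^ m) h)
  rw [Nat.totient_prime (by norm_num)] at h4
  refine orderOf_eq_prime_pow (p := 2) (n := 1) (fun hsq => ?_) h4
  have hsq' := congrArg Units.val hsq
  simp only [Units.val_pow_eq_pow_val, ZMod.coe_unitOfCoprime, Units.val_one] at hsq'
  push_cast at hsq'
  rw [← pow_mul, mul_comm, two_pow_two_mul_of_odd hm] at hsq'
  exact absurd hsq' (by decide)

theorem five_not_dvd_two_pow_sub_one_of_odd {m : ℕ} (hm : Odd m) : ¬ 5 ∣ 2 ^ m - 1 := by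
  intro h
  have h1 : ((2 ^ m : ℕ) : ZMod 5) = 1 := by
    rw [← Nat.cast_one, ZMod.natCast_eq_natCast_iff, Nat.ModEq.comm,
      Nat.modEq_iff_dvd' Nat.one_le_two_pow]
    exact h
  have hsq := ZMod.two_pow_two_mul_of_odd hm
  push_cast at h1
  rw [mul_comm, pow_mul, h1, one_pow] at hsq
  exact absurd hsq (by decide)

theorem irreducible_cyclotomic_five_of_card_eq_two_pow {k : Type*} [Field k] [Fintype k] {m : ℕ}
    (hm : Odd m) (hq : Fintype.card k = 2 ^ m) : Irreducible (cyclotomic 5 k) :=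
  irreducible_of_dvd_cyclotomic_of_natDegree hq (by norm_num) dvd_rfl <| by
    rw [natDegree_cyclotomic, ZMod.orderOf_unitOfCoprime_two_pow_of_odd hm,
      Nat.totient_prime (by norm_num)]

theorem stmt_17 (k : Type*) [Field k] [Fintype k] [CharP k 2]
    (m : ℕ) (hm : Odd m) (hq : Fintype.card k = 2 ^ m)
    (a : k) (ha : a ≠ 0) :
    ∃ z : k, ∃ g : k[X], g.Monic ∧ g.degree = 4 ∧ Irreducible g ∧
      (X ^ 5 + C a⁻¹ : k[X]) = (X + C z) * g := by
  have hcop : (Nat.card kˣ).Coprime 5 := by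
    rw [Nat.card_units, Nat.card_eq_fintype_card, hq]
    exact ((Nat.Prime.coprime_iff_not_dvd (by norm_num)).2
      (five_not_dvd_two_pow_sub_one_of_odd hm)).symm
  obtain ⟨z, hz⟩ := (powCoprime hcop).surjective (Units.mk0 a⁻¹ (inv_ne_zero ha))
  have hz5 : (z : k) ^ 5 = a⁻¹ := by simpa using congrArg Units.val hz
  refine ⟨z, (cyclotomic 5 k).scaleRoots z, (monic_scaleRoots_iff _).2 (cyclotomic.monic 5 k),
    ?_, (irreducible_scaleRoots_iff z).2 (irreducible_cyclotomic_five_of_card_eq_two_pow hm hq), ?_⟩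
  · rw [degree_scaleRoots, degree_cyclotomic, Nat.totient_prime (by norm_num)]
    rfl
  · have := Fact.mk (by norm_num : Nat.Prime 5)
    rw [← CharTwo.sub_eq_add, ← CharTwo.sub_eq_add, ← hz5,
      X_pow_sub_C_pow_eq_X_sub_C_mul_scaleRoots_cyclotomic]
end

section
/- Let $k=\mathbb{F}_{2^m}$, $b\in k$, $a\in k^*$, and let $W\subseteq k$ be the set of roots in $k$ of $E_{ab}(x)=a^4x^{16}+b^4x^8+b^2x^2+ax$, an $\mathbb{F}_2$-subspace of dimension $w\le 4$. Then the image $E_{ab}(k)$ equals the orthogonal complement of $W^4=\{z^4:z\in W\}$ with respect to the bilinear pairing $(x,y)\mapsto\mathrm{Tr}_{k/\mathbb{F}_2}(xy)$; in particular $|E_{ab}(k)|=q/2^w$. -/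
/-!
With respect to the form `(u, v) ↦ Tr(u⁴ v)`, the map `E = E_ab` is self-adjoint:
`Tr(z⁴ E(x)) = Tr(x⁴ E(z))`, because each monomial of one side is a Frobenius power of a monomial
of the other and the trace is Frobenius-invariant. Hence `E(k)` is orthogonal to `W⁴`, and since
`x ↦ x⁴` is injective and the trace form is nondegenerate, both spaces have dimension
`dim k - dim W`.
-/

theorem LinearMap.range_eq_orthogonal_map_ker {K V : Type*} [Field K] [AddCommGroup V]
    [Module K V] [FiniteDimensional K V] {B : LinearMap.BilinForm K V} (hB : B.Nondegenerate)
    (f φ : V →ₗ[K] V) (hφ : Function.Injective φ)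
    (hortho : ∀ z ∈ ker f, ∀ x, B (φ z) (f x) = 0) :
    range f = B.orthogonal ((ker f).map φ) := by
  refine Submodule.eq_of_le_of_finrank_eq ?_ ?_
  · rintro _ ⟨x, rfl⟩ _ ⟨z, hz, rfl⟩
    exact hortho z hz x
  · rw [LinearMap.BilinForm.finrank_orthogonal hB,
      ← (Submodule.equivMapOfInjective φ hφ _).finrank_eq, ← f.finrank_range_add_finrank_ker,
      Nat.add_sub_cancel]

theorem AddMonoidHom.card_range_mul_card_ker {G H : Type*} [AddGroup G] [AddGroup H]
    (f : G →+ H) : Nat.card (Set.range f) * Nat.card f.ker = Nat.card G := by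
  rw [mul_comm, ← f.ker.card_mul_index, AddSubgroup.index_ker]
  rfl

theorem Algebra.trace_pow_card_pow (K : Type*) {L : Type*} [Field K] [Fintype K] [Field L]
    [Algebra K L] [Algebra.IsAlgebraic K L] (x : L) (n : ℕ) :
    Algebra.trace K L (x ^ Fintype.card K ^ n) = Algebra.trace K L x := by
  rw [← congrFun (FiniteField.coe_frobeniusAlgEquivOfAlgebraic_iterate K L n) x,
    ← AlgEquiv.coe_pow, Algebra.trace_eq_of_algEquiv]

section Eab

variable {k : Type*} [CommRing k] [CharP k 2]

def Eab (a b : k) : k →+ k where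
  toFun x := a ^ 4 * x ^ 16 + b ^ 4 * x ^ 8 + b ^ 2 * x ^ 2 + a * x
  map_zero' := by ring
  map_add' x y := by
    have h16 : (x + y) ^ 16 = x ^ 16 + y ^ 16 := add_pow_char_pow x y 2 4
    have h8 : (x + y) ^ 8 = x ^ 8 + y ^ 8 := add_pow_char_pow x y 2 3
    have h2 : (x + y) ^ 2 = x ^ 2 + y ^ 2 := CharTwo.add_sq x y
    rw [h16, h8, h2]
    ring

theorem Eab_apply (a b x : k) :
    Eab a b x = a ^ 4 * x ^ 16 + b ^ 4 * x ^ 8 + b ^ 2 * x ^ 2 + a * x := rfl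

end Eab

theorem trace_pow_four_mul_Eab_comm {k : Type*} [Field k] [Finite k] [CharP k 2]
    [Algebra (ZMod 2) k] (a b x z : k) :
    Algebra.trace (ZMod 2) k (z ^ 4 * Eab a b x) =
      Algebra.trace (ZMod 2) k (x ^ 4 * Eab a b z) := by
  have frob (v : k) (n : ℕ) : Algebra.trace (ZMod 2) k (v ^ 2 ^ n) = Algebra.trace (ZMod 2) k v :=
    Algebra.trace_pow_card_pow (ZMod 2) v n
  calc Algebra.trace (ZMod 2) k (z ^ 4 * Eab a b x)
      = Algebra.trace (ZMod 2) k ((a * z * x ^ 4) ^ 2 ^ 2 + (b ^ 2 * z ^ 2 * x ^ 4) ^ 2 ^ 1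
          + (b * z ^ 2 * x) ^ 2 ^ 1 + a * z ^ 4 * x) := by rw [Eab_apply]; congr 1; ring
    _ = Algebra.trace (ZMod 2) k (a * z * x ^ 4 + b ^ 2 * z ^ 2 * x ^ 4
          + b * z ^ 2 * x + a * z ^ 4 * x) := by simp only [map_add, frob]
    _ = Algebra.trace (ZMod 2) k (a * z * x ^ 4 + b ^ 2 * z ^ 2 * x ^ 4
          + (b * z ^ 2 * x) ^ 2 ^ 2 + (a * z ^ 4 * x) ^ 2 ^ 2) := by simp only [map_add, frob]
    _ = Algebra.trace (ZMod 2) k (x ^ 4 * Eab a b z) := by rw [Eab_apply]; congr 1; ring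

theorem stmt_19_general (k : Type*) [Field k] [Fintype k] [CharP k 2]
    [Algebra (ZMod 2) k]
    (m : ℕ) (hq : Fintype.card k = 2 ^ m)
    (a b : k) :
    Set.range (fun x : k => a ^ 4 * x ^ 16 + b ^ 4 * x ^ 8 + b ^ 2 * x ^ 2 + a * x)
        = {y : k | ∀ z : k,
            a ^ 4 * z ^ 16 + b ^ 4 * z ^ 8 + b ^ 2 * z ^ 2 + a * z = 0 →
            Algebra.trace (ZMod 2) k (z ^ 4 * y) = 0} ∧
    Nat.card (Set.range
          (fun x : k => a ^ 4 * x ^ 16 + b ^ 4 * x ^ 8 + b ^ 2 * x ^ 2 + a * x))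
        * Nat.card {z : k |
            a ^ 4 * z ^ 16 + b ^ 4 * z ^ 8 + b ^ 2 * z ^ 2 + a * z = 0}
      = 2 ^ m := by
  let E := (Eab a b).toZModLinearMap 2
  let frob4 := (iterateFrobenius k 2 2).toAddMonoidHom.toZModLinearMap 2
  have hrange : LinearMap.range E
      = (Algebra.traceForm (ZMod 2) k).orthogonal ((LinearMap.ker E).map frob4) := by
    refine LinearMap.range_eq_orthogonal_map_ker (traceForm_nondegenerate _ _) E frob4
      (iterateFrobenius_inj k 2 2) fun z hz x => ?_
    change Eab a b z = 0 at hz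
    change Algebra.trace (ZMod 2) k (z ^ 4 * Eab a b x) = 0
    rw [trace_pow_four_mul_Eab_comm, hz, mul_zero, map_zero]
  refine ⟨?_, ?_⟩
  · ext y
    have hy := SetLike.ext_iff.mp hrange y
    simp only [LinearMap.mem_range, LinearMap.BilinForm.mem_orthogonal_iff, Submodule.mem_map,
      LinearMap.mem_ker, Algebra.traceForm_apply, forall_exists_index, and_imp,
      forall_apply_eq_imp_iff₂] at hy
    exact hy
  · rw [← hq, ← Nat.card_eq_fintype_card, ← (Eab a b).card_range_mul_card_ker]
    rfl

/-- The image of the additive polynomial map `E_ab(x) = a⁴x¹⁶ + b⁴x⁸ + b²x² + ax`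
on `k = 𝔽_q` is the orthogonal complement, for the trace pairing `Tr(xy)`, of
`W⁴ = {z⁴ : z ∈ W}` where `W = ker E_ab`; in particular `|E_ab(k)|·|W| = q`
(i.e. `|E_ab(k)| = q/2^w` with `w = dim W`). -/
theorem stmt_19 (k : Type*) [Field k] [Fintype k] [CharP k 2]
    [Algebra (ZMod 2) k]
    (m : ℕ) (hm : 0 < m) (hq : Fintype.card k = 2 ^ m)
    (a b : k) (ha : a ≠ 0) :
    Set.range (fun x : k => a ^ 4 * x ^ 16 + b ^ 4 * x ^ 8 + b ^ 2 * x ^ 2 + a * x)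
        = {y : k | ∀ z : k,
            a ^ 4 * z ^ 16 + b ^ 4 * z ^ 8 + b ^ 2 * z ^ 2 + a * z = 0 →
            Algebra.trace (ZMod 2) k (z ^ 4 * y) = 0} ∧
    Nat.card (Set.range
          (fun x : k => a ^ 4 * x ^ 16 + b ^ 4 * x ^ 8 + b ^ 2 * x ^ 2 + a * x))
        * Nat.card {z : k |
            a ^ 4 * z ^ 16 + b ^ 4 * z ^ 8 + b ^ 2 * z ^ 2 + a * z = 0}
      = 2 ^ m :=
  stmt_19_general k m hq a b
end
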